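/- arXiv:2307.12275 — 4 statements merged into one kernel-verified Lean document; each statement's English description precedes it below -/
import Mathlib

section
/- Let R = ℤ[A, A⁻¹] be the ring of Laurent polynomials and work in the polynomial ring R[T]. Define a sequence (x_n)_{n≥1} in R[T] by x_1 = T, x_2 = −A⁴T² − A², and x_n = −A⁸·x_{n−2} − A⁴·T·x_{n−1} for n ≥ 3. Then for every n ≥ 2, the element x_n − (−1)^{n−1}A^{4n−4}T^n lies in the R-submodule of R[T] spanned by {T^{2i} : 0 ≤ 2i ≤ n−2} when n is even, and in the R-submodule spanned by {T^{2i+1} : 0 ≤ 2i+1 ≤ n−2} when n is odd. -/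
/-- The Laurent monomial `A^k` in the ground ring `R = ℤ[A, A⁻¹]`. -/
noncomputable def Apow (k : ℤ) : LaurentPolynomial ℤ := LaurentPolynomial.T k

/-- The sequence `xₙ` in `R[T]`, `R = ℤ[A, A⁻¹]`, defined by `x₁ = T`,
`x₂ = −A⁴T² − A²` and `xₙ = −A⁸·x_{n−2} − A⁴·T·x_{n−1}` for `n ≥ 3`.
The polynomial variable `T` is `Polynomial.X`. -/
noncomputable def xseq : ℕ → Polynomial (LaurentPolynomial ℤ)
  | 0 => 0
  | 1 => Polynomial.X
  | 2 => -Polynomial.C (Apow 4) * Polynomial.X ^ 2 - Polynomial.C (Apow 2)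
  | (n + 3) => -Polynomial.C (Apow 8) * xseq (n + 1)
          - Polynomial.C (Apow 4) * Polynomial.X * xseq (n + 2)

/-!
Write `xₙ = ℓₙ + eₙ` with `ℓₙ = (-1)^(n-1) A^(4n-4) Tⁿ`. Since `ℓₙ₊₁ = -A⁴ T ℓₙ`, the recursion
becomes `eₙ₊₃ = -A⁸ xₙ₊₁ - A⁴ T eₙ₊₂`, and a two-step induction shows that `eₘ₊₂` lies in the span
`Sₘ` of the powers `Tʲ` with `j ≤ m` and `j ≡ m (mod 2)`. Indeed `Sₘ ⊆ Sₘ₊₂ ∋ ℓₘ₊₂`, so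
`xₘ₊₂ ∈ Sₘ₊₂`, and `T · Sₘ ⊆ Sₘ₊₁`.
-/

open Polynomial

section SameParityLE

variable (R : Type*) [CommSemiring R]

noncomputable def sameParityLE (m : ℕ) : Submodule R R[X] :=
  Submodule.span R ((X ^ ·) '' {j | j ≤ m ∧ j % 2 = m % 2})

variable {R}

theorem X_pow_mem_sameParityLE {j m : ℕ} (hj : j ≤ m) (hjm : j % 2 = m % 2) :
    (X ^ j : R[X]) ∈ sameParityLE R m :=
  Submodule.subset_span ⟨j, ⟨hj, hjm⟩, rfl⟩

theorem C_mul_X_pow_mem_sameParityLE (a : R) {j m : ℕ} (hj : j ≤ m) (hjm : j % 2 = m % 2) :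
    C a * X ^ j ∈ sameParityLE R m := by
  rw [← smul_eq_C_mul]
  exact Submodule.smul_mem _ a (X_pow_mem_sameParityLE hj hjm)

theorem sameParityLE_le_add_two (m : ℕ) : sameParityLE R m ≤ sameParityLE R (m + 2) :=
  Submodule.span_mono <| Set.image_mono fun j ⟨hj, hjm⟩ => ⟨by omega, by omega⟩

theorem X_mul_mem_sameParityLE {p : R[X]} {m : ℕ} (hp : p ∈ sameParityLE R m) :
    X * p ∈ sameParityLE R (m + 1) := by
  induction hp using Submodule.span_induction with
  | mem _ hq =>
    obtain ⟨j, ⟨hj, hjm⟩, rfl⟩ := hq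
    rw [← pow_succ']
    exact X_pow_mem_sameParityLE (by omega) (by omega)
  | zero => simp
  | add p q _ _ hp hq => rw [mul_add]; exact add_mem hp hq
  | smul a p _ hp => rw [mul_smul_comm]; exact Submodule.smul_mem _ a hp

theorem sameParityLE_le_span_even {m : ℕ} (hm : Even m) :
    sameParityLE R m ≤ Submodule.span R {p : R[X] | ∃ i : ℕ, 2 * i ≤ m ∧ p = X ^ (2 * i)} := by
  rw [sameParityLE, Submodule.span_le]
  rintro _ ⟨j, ⟨hj, hjm⟩, rfl⟩
  obtain ⟨i, rfl⟩ : ∃ i, j = 2 * i := ⟨j / 2, by grind⟩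
  exact Submodule.subset_span ⟨i, hj, rfl⟩

theorem sameParityLE_le_span_odd {m : ℕ} (hm : Odd m) :
    sameParityLE R m ≤
      Submodule.span R {p : R[X] | ∃ i : ℕ, 2 * i + 1 ≤ m ∧ p = X ^ (2 * i + 1)} := by
  rw [sameParityLE, Submodule.span_le]
  rintro _ ⟨j, ⟨hj, hjm⟩, rfl⟩
  obtain ⟨i, rfl⟩ : ∃ i, j = 2 * i + 1 := ⟨j / 2, by grind⟩
  exact Submodule.subset_span ⟨i, hj, rfl⟩

end SameParityLE

theorem Apow_add (a b : ℤ) : Apow (a + b) = Apow a * Apow b :=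
  LaurentPolynomial.T_add a b

noncomputable def leadingTerm (n : ℕ) : Polynomial (LaurentPolynomial ℤ) :=
  (-1) ^ (n - 1) * C (Apow (4 * (n : ℤ) - 4)) * X ^ n

theorem leadingTerm_add_two (n : ℕ) :
    leadingTerm (n + 2) = -C (Apow 4) * X * leadingTerm (n + 1) := by
  have hA : Apow (4 * ((n + 2 : ℕ) : ℤ) - 4) = Apow 4 * Apow (4 * ((n + 1 : ℕ) : ℤ) - 4) := by
    rw [← Apow_add]; push_cast; ring_nf
  simp only [leadingTerm, hA, C_mul, Nat.add_sub_cancel, show n + 2 - 1 = n + 1 from rfl]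
  ring

theorem leadingTerm_mem_sameParityLE (n : ℕ) : leadingTerm n ∈ sameParityLE _ n := by
  rw [leadingTerm, ← C_1, ← C_neg, ← C_pow, ← C_mul]
  exact C_mul_X_pow_mem_sameParityLE _ le_rfl rfl

theorem xseq_add_three_sub_leadingTerm (n : ℕ) :
    xseq (n + 3) - leadingTerm (n + 3) =
      -C (Apow 8) * xseq (n + 1) - C (Apow 4) * X * (xseq (n + 2) - leadingTerm (n + 2)) := by
  rw [xseq, leadingTerm_add_two (n + 1)]
  ring

theorem xseq_two_sub_leadingTerm_mem_sameParityLE :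
    xseq 2 - leadingTerm 2 ∈ sameParityLE _ 0 := by
  have h : xseq 2 - leadingTerm 2 = C (-Apow 2) * X ^ 0 := by
    norm_num [xseq, leadingTerm]
    ring
  rw [h]
  exact C_mul_X_pow_mem_sameParityLE _ le_rfl rfl

theorem xseq_sub_leadingTerm_mem_sameParityLE (m : ℕ) :
    xseq (m + 2) - leadingTerm (m + 2) ∈ sameParityLE _ m := by
  induction m using Nat.twoStepInduction with
  | zero => exact xseq_two_sub_leadingTerm_mem_sameParityLE
  | one =>
    have hX : (X : Polynomial (LaurentPolynomial ℤ)) ∈ sameParityLE _ 1 := by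
      simpa using X_pow_mem_sameParityLE (R := LaurentPolynomial ℤ) (j := 1) le_rfl rfl
    rw [xseq_add_three_sub_leadingTerm 0, ← C_neg, ← smul_eq_C_mul, mul_assoc, ← smul_eq_C_mul]
    exact sub_mem (Submodule.smul_mem _ _ hX)
      (Submodule.smul_mem _ _ (X_mul_mem_sameParityLE xseq_two_sub_leadingTerm_mem_sameParityLE))
  | more m ih₀ ih₁ =>
    have hx : xseq (m + 2) ∈ sameParityLE _ (m + 2) := by
      simpa using add_mem (sameParityLE_le_add_two m ih₀) (leadingTerm_mem_sameParityLE (m + 2))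
    rw [xseq_add_three_sub_leadingTerm (m + 1), ← C_neg, ← smul_eq_C_mul, mul_assoc,
      ← smul_eq_C_mul]
    exact sub_mem (Submodule.smul_mem _ _ hx) (Submodule.smul_mem _ _ (X_mul_mem_sameParityLE ih₁))

theorem xseq_leading_term (n : ℕ) (hn : 2 ≤ n) :
    (Even n →
      xseq n - (-1) ^ (n - 1) * Polynomial.C (Apow (4 * (n : ℤ) - 4)) * Polynomial.X ^ n ∈
        Submodule.span (LaurentPolynomial ℤ)
          {p : Polynomial (LaurentPolynomial ℤ) |
            ∃ i : ℕ, 2 * i ≤ n - 2 ∧ p = Polynomial.X ^ (2 * i)}) ∧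
    (Odd n →
      xseq n - (-1) ^ (n - 1) * Polynomial.C (Apow (4 * (n : ℤ) - 4)) * Polynomial.X ^ n ∈
        Submodule.span (LaurentPolynomial ℤ)
          {p : Polynomial (LaurentPolynomial ℤ) |
            ∃ i : ℕ, 2 * i + 1 ≤ n - 2 ∧ p = Polynomial.X ^ (2 * i + 1)}) := by
  obtain ⟨m, rfl⟩ := Nat.exists_eq_add_of_le' hn
  have key := xseq_sub_leadingTerm_mem_sameParityLE m
  rw [Nat.add_sub_cancel]
  exact ⟨fun he => sameParityLE_le_span_even ((Nat.even_add.mp he).mpr even_two) key,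
    fun ho => sameParityLE_le_span_odd ((Nat.odd_add.mp ho).mpr even_two) key⟩
end

section
/- Let n ≥ 1 and N ≥ 2. For every conjugation-invariant functional f on TL_{1,N} with values in an R-module M, the following holds: f(t_1^n σ_1) = f(t^n σ_1) + (u − u⁻¹)·Σ_{i=0}^{n−1} f(t^i t_1^{n−i}). -/
/- Common setup: the mixed braid group `B_{1,n}`, the generalized Hecke algebra
of type B `H_{1,n}(u)`, and the generalized Temperley–Lieb algebra of type B
`TL_{1,n}`, following the paper's presentations. The generator `none` is `t`
and `some i` is `σ_{i+1}` for `i : Fin (n-1)`. -/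

/-- Generators of the mixed braid group `B_{1,n}`: `none` is `t`,
`some i` is `σ_{i+1}`. -/
abbrev B1Gen (n : ℕ) := Option (Fin (n - 1))

/-- The generator `t` in the free group. -/
def tF (n : ℕ) : FreeGroup (B1Gen n) := FreeGroup.of none

/-- The generator `σ_{i+1}` in the free group. -/
def sF (n : ℕ) (i : Fin (n - 1)) : FreeGroup (B1Gen n) := FreeGroup.of (some i)

/-- The relators of the mixed braid group `B_{1,n}`:
`σ₁tσ₁t = tσ₁tσ₁`; `tσ_i = σ_it` for `i > 1`; the braid relations
`σ_iσ_{i+1}σ_i = σ_{i+1}σ_iσ_{i+1}`; and `σ_iσ_j = σ_jσ_i` for `|i−j| > 1`. -/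
def mixedRels (n : ℕ) : Set (FreeGroup (B1Gen n)) :=
  { r | (∃ i : Fin (n - 1), (i : ℕ) = 0 ∧
          r = sF n i * tF n * sF n i * tF n * (tF n * sF n i * tF n * sF n i)⁻¹) ∨
        (∃ i : Fin (n - 1), 0 < (i : ℕ) ∧
          r = tF n * sF n i * (sF n i * tF n)⁻¹) ∨
        (∃ i j : Fin (n - 1), (j : ℕ) = (i : ℕ) + 1 ∧
          r = sF n i * sF n j * sF n i * (sF n j * sF n i * sF n j)⁻¹) ∨
        (∃ i j : Fin (n - 1), (i : ℕ) + 1 < (j : ℕ) ∧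
          r = sF n i * sF n j * (sF n j * sF n i)⁻¹) }

/-- The mixed braid group `B_{1,n}`. -/
abbrev MixedBraidGroup (n : ℕ) := PresentedGroup (mixedRels n)

/-- The generator `t` of `B_{1,n}`. -/
def tB (n : ℕ) : MixedBraidGroup n := PresentedGroup.of none

/-- The generator `σ_{i+1}` of `B_{1,n}`. -/
def sB (n : ℕ) (i : Fin (n - 1)) : MixedBraidGroup n := PresentedGroup.of (some i)

variable (R : Type) [CommRing R] (u : Rˣ)

/-- The quadratic Hecke relations `σ_i² = (u − u⁻¹)σ_i + 1` in the group
algebra `R[B_{1,n}]`. -/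
inductive heckeRel (n : ℕ) :
    MonoidAlgebra R (MixedBraidGroup n) → MonoidAlgebra R (MixedBraidGroup n) → Prop where
  | quad (i : Fin (n - 1)) :
      heckeRel n
        (MonoidAlgebra.of R (MixedBraidGroup n) (sB n i) *
          MonoidAlgebra.of R (MixedBraidGroup n) (sB n i))
        (((u : R) - ((u⁻¹ : Rˣ) : R)) • MonoidAlgebra.of R (MixedBraidGroup n) (sB n i) + 1)

/-- The generalized Hecke algebra of type B, `H_{1,n}(u)`. -/
abbrev Hecke (n : ℕ) := RingQuot (heckeRel R u n)

/-- The canonical (multiplicative) map `B_{1,n} → H_{1,n}(u)`. -/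
noncomputable def toHecke (n : ℕ) : MixedBraidGroup n →* Hecke R u n :=
  (RingQuot.mkRingHom (heckeRel R u n)).toMonoidHom.comp
    (MonoidAlgebra.of R (MixedBraidGroup n))

/-- The Temperley–Lieb relations: the generators
`1 + u(σ_i + σ_{i+1}) + u²(σ_iσ_{i+1} + σ_{i+1}σ_i) + u³σ_iσ_{i+1}σ_i`
of the defining ideal are set to `0`. -/
inductive tlRel (n : ℕ) : Hecke R u n → Hecke R u n → Prop where
  | cubic (i j : Fin (n - 1)) (hij : (j : ℕ) = (i : ℕ) + 1) :
      tlRel n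
        (1 + (u : R) • (toHecke R u n (sB n i) + toHecke R u n (sB n j))
          + ((u : R) ^ 2) • (toHecke R u n (sB n i) * toHecke R u n (sB n j)
              + toHecke R u n (sB n j) * toHecke R u n (sB n i))
          + ((u : R) ^ 3) •
              (toHecke R u n (sB n i) * toHecke R u n (sB n j) * toHecke R u n (sB n i)))
        0

/-- The generalized Temperley–Lieb algebra of type B, `TL_{1,n}`. -/
abbrev TL (n : ℕ) := RingQuot (tlRel R u n)

/-- The canonical (multiplicative) map `B_{1,n} → TL_{1,n}`. -/
noncomputable def toTL (n : ℕ) : MixedBraidGroup n →* TL R u n :=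
  (RingQuot.mkRingHom (tlRel R u n)).toMonoidHom.comp (toHecke R u n)

/-- The element `t` of `TL_{1,n}`. -/
noncomputable def tT (n : ℕ) : TL R u n := toTL R u n (tB n)

/-- The element `σ₁` of `TL_{1,n}` (needs `2 ≤ n`). -/
noncomputable def σ₁T (n : ℕ) (hn : 2 ≤ n) : TL R u n :=
  toTL R u n (sB n ⟨0, by omega⟩)

/-- The element `σ₁⁻¹` of `TL_{1,n}`, the image of the inverse braid
generator (needs `2 ≤ n`). -/
noncomputable def σ₁invT (n : ℕ) (hn : 2 ≤ n) : TL R u n :=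
  toTL R u n (sB n ⟨0, by omega⟩)⁻¹

/-- The looping element `t₁ = σ₁ t σ₁` of `TL_{1,n}` (needs `2 ≤ n`). -/
noncomputable def t₁T (n : ℕ) (hn : 2 ≤ n) : TL R u n :=
  toTL R u n (sB n ⟨0, by omega⟩ * tB n * sB n ⟨0, by omega⟩)

/-
Write `c = u - u⁻¹`. From the Hecke relation `σ₁² = cσ₁ + 1` and `t₁ = σ₁tσ₁` one gets
`t₁σ₁ = c t₁ + σ₁t`. Hence `tʲt₁ᵏ⁺¹σ₁ = c tʲt₁ᵏ⁺¹ + (tʲt₁ᵏσ₁)t`, and under a trace-like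
functional the trailing `t` moves to the front, giving `tʲ⁺¹t₁ᵏσ₁`. Iterating `n` times
trades every `t₁` for a `t`, each step contributing one term `c f(tⁱt₁ⁿ⁻ⁱ)`.
-/

section TraceLike

variable {S A M : Type*} [CommSemiring S] [Semiring A] [Algebra S A]
  [AddCommMonoid M] [Module S M]

theorem map_pow_mul_pow_mul_of_mul_eq (f : A →ₗ[S] M) (hf : ∀ a b : A, f (a * b) = f (b * a))
    {c : S} {s t t₁ : A} (h : t₁ * s = c • t₁ + s * t) (k j : ℕ) :
    f (t ^ j * t₁ ^ k * s)
      = f (t ^ (j + k) * s) + c • ∑ i ∈ Finset.range k, f (t ^ (j + i) * t₁ ^ (k - i)) := by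
  induction k generalizing j with
  | zero => simp
  | succ k ih =>
    have step : f (t ^ j * t₁ ^ (k + 1) * s)
        = c • f (t ^ j * t₁ ^ (k + 1)) + f (t ^ (j + 1) * t₁ ^ k * s) := by
      have hsplit : t ^ j * t₁ ^ (k + 1) * s
          = c • (t ^ j * t₁ ^ (k + 1)) + t ^ j * t₁ ^ k * s * t := by
        rw [pow_succ, ← mul_assoc, mul_assoc (t ^ j * t₁ ^ k) t₁ s, h, mul_add, mul_smul_comm,
          ← mul_assoc]
      rw [hsplit, map_add, map_smul, hf _ t]
      simp only [pow_succ', mul_assoc]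
    rw [step, ih (j + 1), Finset.sum_range_succ', smul_add]
    simp only [Nat.add_right_comm j 1, Nat.add_sub_add_right, add_zero]
    ac_rfl

end TraceLike

theorem toTL_sB_mul_self (N : ℕ) (i : Fin (N - 1)) :
    toTL R u N (sB N i) * toTL R u N (sB N i)
      = ((u : R) - ((u⁻¹ : Rˣ) : R)) • toTL R u N (sB N i) + 1 := by
  have hTL : toTL R u N (sB N i) = RingQuot.mkAlgHom R (tlRel R u N)
      (RingQuot.mkAlgHom R (heckeRel R u N) (MonoidAlgebra.of R _ (sB N i))) := by
    simp only [toTL, toHecke, ← RingQuot.mkAlgHom_coe R]; rfl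
  rw [hTL, ← map_mul, ← map_mul, RingQuot.mkAlgHom_rel R (heckeRel.quad i)]
  simp only [map_add, map_smul, map_one]

theorem lemma1_i (M : Type) [AddCommGroup M] [Module R M]
    (N n : ℕ) (hN : 2 ≤ N)
    (f : TL R u N →ₗ[R] M) (hf : ∀ a b : TL R u N, f (a * b) = f (b * a)) :
    f (t₁T R u N hN ^ n * σ₁T R u N hN)
      = f (tT R u N ^ n * σ₁T R u N hN)
        + ((u : R) - ((u⁻¹ : Rˣ) : R)) •
            ∑ i ∈ Finset.range n, f (tT R u N ^ i * t₁T R u N hN ^ (n - i)) := by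
  have ht₁ : t₁T R u N hN = σ₁T R u N hN * tT R u N * σ₁T R u N hN := by
    simp only [t₁T, map_mul]; rfl
  have hmul : t₁T R u N hN * σ₁T R u N hN
      = ((u : R) - ((u⁻¹ : Rˣ) : R)) • t₁T R u N hN + σ₁T R u N hN * tT R u N := by
    rw [ht₁, mul_assoc, σ₁T, toTL_sB_mul_self, mul_add, mul_one, mul_smul_comm]
  simpa using map_pow_mul_pow_mul_of_mul_eq f hf hmul n 0
end

section
/- Let n ≥ 1 and N ≥ 2. For every conjugation-invariant functional f on TL_{1,N} with values in an R-module M, the following holds: f(t_1^n σ_1^{−1}) = f(t^n σ_1) + (u − u⁻¹)·Σ_{i=1}^{n−1} f(t^i t_1^{n−i}). -/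
variable (R : Type) [CommRing R] (u : Rˣ)

/-!
Only the quadratic relation `σ₁² = (u - u⁻¹)σ₁ + 1` matters: it gives `σ₁ = σ₁⁻¹ + (u - u⁻¹)`,
so the identity holds in any algebra for any trace-like functional `f`. Moving one `σ₁` around cyclically gives
`f (σ₁⁻¹ tᵏ t₁ᵐ⁺¹) = f (σ₁ tᵏ⁺¹ t₁ᵐ)` because `t₁ σ₁⁻¹ = σ₁ t`; replacing that `σ₁` by
`σ₁⁻¹ + (u - u⁻¹)` produces one term of the sum and lets the power of `t` grow by one. After `n`
steps only `f (σ₁ tⁿ)` is left.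
-/

section TraceLike

variable {R A M : Type*} [CommRing R] [Ring A] [Algebra R A] [AddCommGroup M] [Module R M]

theorem eq_add_smul_one_of_mul_self {s s' : A} {δ : R} (hinv : s * s' = 1)
    (hquad : s * s = δ • s + 1) : s = s' + δ • 1 := by
  calc s = s * s * s' := by rw [mul_assoc, hinv, mul_one]
    _ = s' + δ • 1 := by rw [hquad, add_mul, smul_mul_assoc, hinv, one_mul, add_comm]

theorem map_inv_mul_conj_pow_succ {s s' : A} (t : A) (hinv : s * s' = 1) (f : A →ₗ[R] M)
    (hf : ∀ a b : A, f (a * b) = f (b * a)) (k m : ℕ) :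
    f (s' * (t ^ k * (s * t * s) ^ (m + 1))) = f (s * (t ^ (k + 1) * (s * t * s) ^ m)) := by
  have hcancel : t ^ k * (s * t * s) ^ (m + 1) * s' = t ^ k * (s * t * s) ^ m * s * t := by
    rw [pow_succ]
    simp only [mul_assoc, hinv, mul_one]
  rw [hf, hcancel, hf, ← mul_assoc, ← mul_assoc, ← pow_succ', hf]

theorem map_mul_pow_conj_eq_sum {s s' : A} (t : A) {δ : R} (hinv : s * s' = 1)
    (hquad : s * s = δ • s + 1) (f : A →ₗ[R] M) (hf : ∀ a b : A, f (a * b) = f (b * a))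
    {n k : ℕ} (hk : k ≤ n) :
    f (s * (t ^ k * (s * t * s) ^ (n - k)))
      = f (t ^ n * s) + δ • ∑ i ∈ Finset.Ico k n, f (t ^ i * (s * t * s) ^ (n - i)) := by
  induction hk using Nat.decreasingInduction with
  | self => rw [Nat.sub_self, pow_zero, mul_one, hf, Finset.Ico_self, Finset.sum_empty,
      smul_zero, add_zero]
  | of_succ k hkn ih =>
    obtain ⟨m, hm⟩ : ∃ m, n - k = m + 1 := ⟨n - (k + 1), by omega⟩
    have hsplit : ∀ x, f (s * x) = f (s' * x) + δ • f x := fun x => by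
      rw [eq_add_smul_one_of_mul_self hinv hquad, add_mul, smul_mul_assoc, one_mul, map_add,
        map_smul]
    have hm' : n - (k + 1) = m := by omega
    rw [hm, hsplit, map_inv_mul_conj_pow_succ t hinv f hf, ← hm', ih,
      Finset.sum_eq_sum_Ico_succ_bot hkn, hm, hm', smul_add]
    abel

theorem map_conj_pow_mul_inv {s s' : A} (t : A) {δ : R} (hinv : s * s' = 1)
    (hquad : s * s = δ • s + 1) (f : A →ₗ[R] M) (hf : ∀ a b : A, f (a * b) = f (b * a))
    {n : ℕ} (hn : 1 ≤ n) :
    f ((s * t * s) ^ n * s')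
      = f (t ^ n * s) + δ • ∑ i ∈ Finset.Ico 1 n, f (t ^ i * (s * t * s) ^ (n - i)) := by
  obtain ⟨m, rfl⟩ : ∃ m, n = m + 1 := ⟨n - 1, by omega⟩
  have h := map_inv_mul_conj_pow_succ t hinv f hf 0 m
  rw [pow_zero, one_mul, ← hf] at h
  rw [h, ← map_mul_pow_conj_eq_sum t hinv hquad f hf hn, Nat.add_sub_cancel]

end TraceLike

theorem toTL_eq_mkAlgHom (n : ℕ) (g : MixedBraidGroup n) :
    toTL R u n g
      = RingQuot.mkAlgHom R (tlRel R u n)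
          (RingQuot.mkAlgHom R (heckeRel R u n) (MonoidAlgebra.of R (MixedBraidGroup n) g)) := by
  simp only [← AlgHom.coe_toRingHom, RingQuot.mkAlgHom_coe]
  rfl

theorem σ₁T_mul_σ₁invT (N : ℕ) (hN : 2 ≤ N) : σ₁T R u N hN * σ₁invT R u N hN = 1 := by
  rw [σ₁T, σ₁invT, ← map_mul, mul_inv_cancel, map_one]

theorem σ₁T_mul_self (N : ℕ) (hN : 2 ≤ N) :
    σ₁T R u N hN * σ₁T R u N hN = ((u : R) - ((u⁻¹ : Rˣ) : R)) • σ₁T R u N hN + 1 := by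
  have h := RingQuot.mkAlgHom_rel R (heckeRel.quad (R := R) (u := u) (n := N) ⟨0, by omega⟩)
  rw [map_mul, map_add, map_smul, map_one] at h
  have h' := congrArg (RingQuot.mkAlgHom R (tlRel R u N)) h
  rw [map_mul, map_add, map_smul, map_one] at h'
  rwa [σ₁T, toTL_eq_mkAlgHom]

theorem t₁T_eq (N : ℕ) (hN : 2 ≤ N) : t₁T R u N hN = σ₁T R u N hN * tT R u N * σ₁T R u N hN := by
  rw [t₁T, σ₁T, tT, map_mul, map_mul]

/-- Lemma 1(ii) of the paper: for every conjugation-invariant functional `f` on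
`TL_{1,N}`, `f(t₁ⁿσ₁⁻¹) = f(tⁿσ₁) + (u − u⁻¹)·Σ_{i=1}^{n−1} f(tⁱ t₁^{n−i})`. -/
theorem lemma1_ii (M : Type) [AddCommGroup M] [Module R M]
    (N n : ℕ) (hN : 2 ≤ N) (hn : 1 ≤ n)
    (f : TL R u N →ₗ[R] M) (hf : ∀ a b : TL R u N, f (a * b) = f (b * a)) :
    f (t₁T R u N hN ^ n * σ₁invT R u N hN)
      = f (tT R u N ^ n * σ₁T R u N hN)
        + ((u : R) - ((u⁻¹ : Rˣ) : R)) •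
            ∑ i ∈ Finset.Ico 1 n, f (tT R u N ^ i * t₁T R u N hN ^ (n - i)) := by
  rw [t₁T_eq]
  exact map_conj_pow_mul_inv (tT R u N) (σ₁T_mul_σ₁invT R u N hN) (σ₁T_mul_self R u N hN) f hf hn
end

section
/- Let M be a module over ℤ[A, A⁻¹], let (τ_j)_{j∈ℕ} be a sequence of elements of M, and let y_{k,m} ∈ M be defined for all natural numbers k ≥ m ≥ 0 by y_{k,0} = τ_k and, for k ≥ m ≥ 1, y_{k,m} = −A^{−2}·τ_{k+m} − A³·τ_{k+m−2} − A·y_{k−1,m−1}. Then for all k ≥ m > 0, the element y_{k,m} + A^{−2}·τ_{k+m} lies in the ℤ[A, A⁻¹]-submodule of M spanned by the elements τ_j with j ≤ k + m − 2 and j ≡ k + m (mod 2). -/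
/-- The elements `y_{k,m}` defined by `y_{k,0} = τ_k` and, for `k ≥ m ≥ 1`,
`y_{k,m} = −A⁻²·τ_{k+m} − A³·τ_{k+m−2} − A·y_{k−1,m−1}`, where `A^j` is the
Laurent monomial `LaurentPolynomial.T j` in `ℤ[A, A⁻¹]`. -/
noncomputable def yseq (M : Type*) [AddCommGroup M] [Module (LaurentPolynomial ℤ) M]
    (τ : ℕ → M) : ℕ → ℕ → M
  | k, 0 => τ k
  | k, (m + 1) =>
      -((LaurentPolynomial.T (-2) : LaurentPolynomial ℤ) • τ (k + (m + 1)))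
        - (LaurentPolynomial.T 3 : LaurentPolynomial ℤ) • τ (k + (m + 1) - 2)
        - (LaurentPolynomial.T 1 : LaurentPolynomial ℤ) • yseq M τ (k - 1) m

/-! In `y_{k,m+1} = −A⁻²·τ_{k+m+1} − A³·τ_{k+m−1} − A·y_{k−1,m}` every term but the first is a
combination of `τ_j` with `j ≤ k + m − 1` and `j ≡ k + m + 1 (mod 2)`: for `y_{k−1,m}` this is
`τ_{k−1}` when `m = 0`, and otherwise follows by induction on `m`, since the leading term of
`y_{k−1,m}` is `−A⁻²·τ_{k+m−1}`. -/

open LaurentPolynomial Submodule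

section SpanBelowSameParity

variable {R M : Type*} [Semiring R] [AddCommMonoid M] [Module R M]

variable (R) in
/-- `n - 2` truncates: `spanBelowSameParity R τ 0` is `span R {τ 0}`, not `⊥`. -/
def spanBelowSameParity (τ : ℕ → M) (n : ℕ) : Submodule R M :=
  span R {x | ∃ j : ℕ, j ≤ n - 2 ∧ j % 2 = n % 2 ∧ x = τ j}

theorem spanBelowSameParity_mono (τ : ℕ → M) {n n' : ℕ} (hle : n ≤ n')
    (hpar : n % 2 = n' % 2) : spanBelowSameParity R τ n ≤ spanBelowSameParity R τ n' :=
  span_mono fun _ ⟨j, hj, hj_par, hx⟩ => ⟨j, by omega, by omega, hx⟩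

theorem apply_mem_spanBelowSameParity (τ : ℕ → M) {j n : ℕ} (hj : j + 2 ≤ n)
    (hpar : j % 2 = n % 2) : τ j ∈ spanBelowSameParity R τ n :=
  subset_span ⟨j, by omega, hpar, rfl⟩

end SpanBelowSameParity

section Yseq

variable {M : Type*} [AddCommGroup M] [Module ℤ[T;T⁻¹] M] (τ : ℕ → M)

theorem yseq_zero (k : ℕ) : yseq M τ k 0 = τ k := by
  rw [yseq]

theorem yseq_succ_add_T_neg_two (k m : ℕ) :
    yseq M τ k (m + 1) + (T (-2) : ℤ[T;T⁻¹]) • τ (k + m + 1) =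
      -((T 3 : ℤ[T;T⁻¹]) • τ (k + m - 1)) - (T 1 : ℤ[T;T⁻¹]) • yseq M τ (k - 1) m := by
  rw [yseq, ← add_assoc, show k + m + 1 - 2 = k + m - 1 by omega]
  abel

theorem yseq_succ_add_T_neg_two_mem_of_mem {k m : ℕ} (hk : 0 < k)
    (hy : yseq M τ (k - 1) m ∈ spanBelowSameParity ℤ[T;T⁻¹] τ (k + m + 1)) :
    yseq M τ k (m + 1) + (T (-2) : ℤ[T;T⁻¹]) • τ (k + m + 1) ∈
      spanBelowSameParity ℤ[T;T⁻¹] τ (k + m + 1) := by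
  rw [yseq_succ_add_T_neg_two]
  have hτ := apply_mem_spanBelowSameParity (R := ℤ[T;T⁻¹]) τ (j := k + m - 1)
    (n := k + m + 1) (by omega) (by omega)
  exact sub_mem (neg_mem (smul_mem _ _ hτ)) (smul_mem _ _ hy)

theorem yseq_succ_add_T_neg_two_mem {k m : ℕ} (hkm : m < k) :
    yseq M τ k (m + 1) + (T (-2) : ℤ[T;T⁻¹]) • τ (k + m + 1) ∈
      spanBelowSameParity ℤ[T;T⁻¹] τ (k + m + 1) := by
  induction m generalizing k with
  | zero =>
    refine yseq_succ_add_T_neg_two_mem_of_mem τ (m := 0) hkm ?_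
    rw [yseq_zero]
    exact apply_mem_spanBelowSameParity τ (by omega) (by omega)
  | succ m ih =>
    refine yseq_succ_add_T_neg_two_mem_of_mem τ (m := m + 1) (by omega) ?_
    have hz := spanBelowSameParity_mono τ (n' := k + (m + 1) + 1) (by omega) (by omega)
      (ih (k := k - 1) (by omega))
    rw [← add_sub_cancel_right (yseq M τ (k - 1) (m + 1))
      ((T (-2) : ℤ[T;T⁻¹]) • τ (k - 1 + m + 1))]
    exact sub_mem hz (smul_mem _ _ (apply_mem_spanBelowSameParity τ (by omega) (by omega)))

end Yseq

theorem yseq_leading_term (M : Type*) [AddCommGroup M] [Module (LaurentPolynomial ℤ) M]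
    (τ : ℕ → M) (k m : ℕ) (hm : 0 < m) (hkm : m ≤ k) :
    yseq M τ k m + (LaurentPolynomial.T (-2) : LaurentPolynomial ℤ) • τ (k + m) ∈
      Submodule.span (LaurentPolynomial ℤ)
        {x : M | ∃ j : ℕ, j ≤ k + m - 2 ∧ j % 2 = (k + m) % 2 ∧ x = τ j} := by
  obtain ⟨m, rfl⟩ := Nat.exists_eq_add_one_of_ne_zero hm.ne'
  exact yseq_succ_add_T_neg_two_mem τ (by omega)
end
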